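/- arXiv:2106.02534 — 4 statements merged into one kernel-verified Lean document; each statement's English description precedes it below -/
import Mathlib

section
/- For all nonnegative integers m and n, every cyclic permutation of length mn+2 contains the cyclic pattern [ι_{m+2}] (the cyclic increasing pattern of length m+2) or the cyclic pattern [δ_{n+2}] (the cyclic decreasing pattern of length n+2). -/
/-!
Rotate `[σ]` so that its minimal entry `0` comes first; the remaining `mn + 1` entries contain,
by the linear Erdős–Szekeres theorem, an increasing subsequence of length `m + 1` or a decreasing
one of length `n + 1`. Prefixing `0` to the former gives `ι_{m+2}` in that rotation; appending `0`
to the latter gives `δ_{n+2}` in the next rotation, which ends with `0`.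

The linear theorem is proved by labelling each index with the length of the longest increasing
subsequence ending there: if no label exceeds `m`, some label is shared by more than `n` indices,
and these form a decreasing subsequence.
-/

/-- A sequence `σ` of length `n` (with distinct values) contains the pattern `π`
of length `k` if some subsequence of `σ` is order isomorphic to `π`. -/
def ContainsPat {n k : ℕ} (σ : Fin n → Fin n) (π : Fin k → ℕ) : Prop :=
  ∃ f : Fin k → Fin n, StrictMono f ∧ ∀ i j : Fin k, π i < π j ↔ σ (f i) < σ (f j)

/-- The rotation of the sequence `σ` starting at position `r`. -/
def rotSeq {n : ℕ} (σ : Fin n → Fin n) (r : Fin n) : Fin n → Fin n :=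
  fun i => σ (i + r)

/-- The cyclic permutation `[σ]` contains the cyclic pattern `[π]` if some
rotation of `σ` contains `π` linearly. -/
def CycContains {n k : ℕ} (σ : Fin n → Fin n) (π : Fin k → ℕ) : Prop :=
  ∃ r : Fin n, ContainsPat (rotSeq σ r) π

/-- The cyclic permutation `[σ]` avoids the cyclic pattern `[π]`. -/
def CycAvoids {n k : ℕ} (σ : Fin n → Fin n) (π : Fin k → ℕ) : Prop :=
  ¬ CycContains σ π

/-- The cyclic permutation `[σ]`, i.e. the set of all rotations of `σ`. -/
def CycClass {n : ℕ} (σ : Fin n → Fin n) : Set (Fin n → Fin n) :=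
  Set.range (rotSeq σ)

/-- The set of cyclic permutations (rotation classes) of length `n` all of whose
representatives are permutations and which satisfy the (rotation-invariant)
predicate `P`. -/
def AvClasses (n : ℕ) (P : (Fin n → Fin n) → Prop) : Set (Set (Fin n → Fin n)) :=
  { C | ∃ σ : Equiv.Perm (Fin n), C = CycClass ⇑σ ∧ P ⇑σ }

/-- The cyclic descent number: the number of indices `i` (mod `n`) with
`σ i > σ (i+1)`. -/
def cdes {n : ℕ} (σ : Fin n → Fin n) : ℕ :=
  (Finset.univ.filter fun i : Fin n =>
    σ ⟨(↑i + 1) % n, Nat.mod_lt _ i.pos⟩ < σ i).card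

/-- The cyclic peak number: the number of indices `i` (mod `n`) with
`σ (i-1) < σ i > σ (i+1)`. -/
def cpk {n : ℕ} (σ : Fin n → Fin n) : ℕ :=
  (Finset.univ.filter fun i : Fin n =>
    σ ⟨(↑i + (n - 1)) % n, Nat.mod_lt _ i.pos⟩ < σ i ∧
    σ ⟨(↑i + 1) % n, Nat.mod_lt _ i.pos⟩ < σ i).card

open Finset

theorem Fin.strictMono_snoc {α : Type*} [Preorder α] {n : ℕ} {f : Fin n → α} {a : α} :
    StrictMono (Fin.snoc f a : Fin (n + 1) → α) ↔ StrictMono f ∧ ∀ i, f i < a := by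
  rw [← Fin.insertNth_last', Fin.strictMono_insertNth_iff]
  simp [Fin.castSucc_lt_last, not_le_of_gt]

section LongestIncreasing

variable {ι α : Type*} [LinearOrder ι] [Fintype ι] [LinearOrder α] (g : ι → α)

open Classical in
noncomputable def incSubseqsEndingAt (i : ι) : Finset (Finset ι) :=
  {t | StrictMonoOn g t ∧ IsGreatest (t : Set ι) i}

noncomputable def lisEndingAt (i : ι) : ℕ := (incSubseqsEndingAt g i).sup card

theorem mem_incSubseqsEndingAt {i : ι} {t : Finset ι} :
    t ∈ incSubseqsEndingAt g i ↔ StrictMonoOn g t ∧ IsGreatest (t : Set ι) i := by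
  simp [incSubseqsEndingAt]

theorem singleton_mem_incSubseqsEndingAt (i : ι) : {i} ∈ incSubseqsEndingAt g i := by
  simp [mem_incSubseqsEndingAt, isGreatest_singleton]

theorem one_le_lisEndingAt (i : ι) : 1 ≤ lisEndingAt g i :=
  le_sup (f := card) (singleton_mem_incSubseqsEndingAt g i)

theorem lisEndingAt_le {r : ℕ} (h : ∀ t : Finset ι, StrictMonoOn g t → #t ≤ r) (i : ι) :
    lisEndingAt g i ≤ r :=
  Finset.sup_le fun t ht ↦ h t ((mem_incSubseqsEndingAt g).1 ht).1

variable {g} in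
theorem lisEndingAt_lt_lisEndingAt {i j : ι} (hij : i < j) (hg : g i < g j) :
    lisEndingAt g i < lisEndingAt g j := by
  obtain ⟨t, ht, hcard⟩ :=
    exists_mem_eq_sup _ ⟨_, singleton_mem_incSubseqsEndingAt g i⟩ card
  obtain ⟨hmono, hit, hle⟩ := (mem_incSubseqsEndingAt g).1 ht
  have hlej : ∀ x ∈ t, x ≤ j := fun x hx ↦ (hle hx).trans hij.le
  have hext : insert j t ∈ incSubseqsEndingAt g j := by
    refine (mem_incSubseqsEndingAt g).2 ⟨?_, ?_⟩
    · rw [coe_insert, strictMonoOn_insert_iff_of_forall_le hlej]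
      exact ⟨fun x hx _ ↦ (hmono.monotoneOn hx hit (hle hx)).trans_lt hg, hmono⟩
    · rw [coe_insert]
      exact ⟨Set.mem_insert _ _, Set.insert_subset_iff.2 ⟨le_rfl, hlej⟩⟩
  calc lisEndingAt g i = #t := hcard
    _ < #(insert j t) := by rw [card_insert_of_notMem fun hj ↦ (hle hj).not_gt hij]; omega
    _ ≤ lisEndingAt g j := le_sup (f := card) hext

end LongestIncreasing

section ErdosSzekeres

variable {ι α : Type*} [LinearOrder ι] [Fintype ι] [LinearOrder α] {g : ι → α}

theorem exists_strictMonoOn_or_strictAntiOn (hg : Function.Injective g) {r s : ℕ}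
    (hcard : r * s < Fintype.card ι) :
    (∃ t : Finset ι, r < #t ∧ StrictMonoOn g t) ∨
      ∃ t : Finset ι, s < #t ∧ StrictAntiOn g t := by
  refine or_iff_not_imp_left.2 fun hinc ↦ ?_
  push Not at hinc
  have hbound : ∀ i ∈ (univ : Finset ι), lisEndingAt g i ∈ Icc 1 r := fun i _ ↦
    mem_Icc.2 ⟨one_le_lisEndingAt g i,
      lisEndingAt_le g (fun t ht ↦ not_lt.1 fun h ↦ hinc t h ht) i⟩
  obtain ⟨y, -, hy⟩ := exists_lt_card_fiber_of_mul_lt_card_of_maps_to hbound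
    (by rwa [Nat.card_Icc, Nat.add_sub_cancel, card_univ])
  refine ⟨_, hy, fun i hi j hj hij ↦ ?_⟩
  simp only [coe_filter, mem_univ, true_and, Set.mem_ofPred_eq] at hi hj
  refine lt_of_le_of_ne (not_lt.1 fun hlt ↦ ?_) (hg.ne hij.ne')
  exact (lisEndingAt_lt_lisEndingAt hij hlt).ne (hi.trans hj.symm)

theorem exists_strictMono_comp_or_strictAnti_comp (hg : Function.Injective g) {r s : ℕ}
    (hcard : r * s < Fintype.card ι) :
    (∃ f : Fin (r + 1) → ι, StrictMono f ∧ StrictMono (g ∘ f)) ∨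
      ∃ f : Fin (s + 1) → ι, StrictMono f ∧ StrictAnti (g ∘ f) := by
  rcases exists_strictMonoOn_or_strictAntiOn hg hcard with ⟨t, ht, hmono⟩ | ⟨t, ht, hanti⟩
  · refine .inl ⟨t.orderEmbOfCardLe ht, (t.orderEmbOfCardLe ht).strictMono, fun a b hab ↦ ?_⟩
    exact hmono (t.orderEmbOfCardLe_mem ht a) (t.orderEmbOfCardLe_mem ht b)
      ((t.orderEmbOfCardLe ht).strictMono hab)
  · refine .inr ⟨t.orderEmbOfCardLe ht, (t.orderEmbOfCardLe ht).strictMono, fun a b hab ↦ ?_⟩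
    exact hanti (t.orderEmbOfCardLe_mem ht a) (t.orderEmbOfCardLe_mem ht b)
      ((t.orderEmbOfCardLe ht).strictMono hab)

end ErdosSzekeres

section Patterns

variable {n k : ℕ} {σ : Fin n → Fin n} {π : Fin k → ℕ} {f : Fin k → Fin n}

theorem containsPat_of_strictMono (hπ : StrictMono π) (hf : StrictMono f)
    (hσ : StrictMono (σ ∘ f)) : ContainsPat σ π :=
  ⟨f, hf, fun _ _ ↦ hπ.lt_iff_lt.trans hσ.lt_iff_lt.symm⟩

theorem containsPat_of_strictAnti (hπ : StrictAnti π) (hf : StrictMono f)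
    (hσ : StrictAnti (σ ∘ f)) : ContainsPat σ π :=
  ⟨f, hf, fun _ _ ↦ hπ.lt_iff_gt.trans hσ.lt_iff_gt.symm⟩

end Patterns

section Rotations

variable {k l : ℕ} {σ : Fin (k + 1) → Fin (k + 1)} {r : Fin (k + 1)} {f : Fin l → Fin k}

theorem containsPat_rotSeq_of_strictMono {π : Fin (l + 1) → ℕ} (hπ : StrictMono π)
    (hr : ∀ i : Fin k, σ r < σ (i.succ + r)) (hf : StrictMono f)
    (hσf : StrictMono fun j ↦ σ ((f j).succ + r)) : ContainsPat (rotSeq σ r) π := by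
  refine containsPat_of_strictMono hπ (f := Fin.cons 0 (Fin.succ ∘ f))
    (Fin.strictMono_cons.2 ⟨fun j ↦ Fin.succ_pos _, Fin.strictMono_succ.comp hf⟩) ?_
  rw [Fin.comp_cons]
  refine Fin.strictMono_cons.2 ⟨fun j ↦ ?_, hσf⟩
  simpa [rotSeq] using hr (f j)

theorem containsPat_rotSeq_add_one_of_strictAnti {π : Fin (l + 1) → ℕ} (hπ : StrictAnti π)
    (hr : ∀ i : Fin k, σ r < σ (i.succ + r)) (hf : StrictMono f)
    (hσf : StrictAnti fun j ↦ σ ((f j).succ + r)) : ContainsPat (rotSeq σ (r + 1)) π := by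
  refine containsPat_of_strictAnti hπ (f := Fin.snoc (Fin.castSucc ∘ f) (Fin.last k))
    (Fin.strictMono_snoc.2 ⟨Fin.strictMono_castSucc.comp hf, fun _ ↦ Fin.castSucc_lt_last _⟩)
    ?_
  rw [Fin.comp_snoc]
  have hcast : ∀ i : Fin k, rotSeq σ (r + 1) i.castSucc = σ (i.succ + r) := fun i ↦ by
    rw [rotSeq, add_comm r, ← add_assoc, Fin.coeSucc_eq_succ]
  have hlast : rotSeq σ (r + 1) (Fin.last k) = σ r := by
    rw [rotSeq, add_comm r, ← add_assoc, Fin.last_add_one, zero_add]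
  refine (Fin.strictMono_snoc (α := (Fin (k + 1))ᵒᵈ)).2 ⟨fun a b hab ↦ ?_, fun j ↦ ?_⟩
  · change rotSeq σ (r + 1) (f b).castSucc < rotSeq σ (r + 1) (f a).castSucc
    rw [hcast, hcast]
    exact hσf hab
  · change rotSeq σ (r + 1) (Fin.last k) < rotSeq σ (r + 1) (f j).castSucc
    rw [hcast, hlast]
    exact hr (f j)

end Rotations

/-- Cyclic Erdős–Szekeres: every cyclic permutation of length `m*n+2` contains
the cyclic increasing pattern of length `m+2` or the cyclic decreasing pattern
of length `n+2`. -/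
theorem cyclic_erdos_szekeres (m n : ℕ) (σ : Equiv.Perm (Fin (m * n + 2))) :
    CycContains ⇑σ (fun i : Fin (m + 2) => (i : ℕ) + 1) ∨
    CycContains ⇑σ (fun i : Fin (n + 2) => (n + 2) - (i : ℕ)) := by
  obtain ⟨r, hσr⟩ := σ.surjective 0
  have hr : ∀ i : Fin (m * n + 1), σ r < σ (i.succ + r) := fun i ↦ by
    rw [hσr, Fin.pos_iff_ne_zero]
    exact fun h ↦ Fin.succ_ne_zero i (add_eq_right.1 (σ.injective (h.trans hσr.symm)))
  have hinj : Function.Injective fun i : Fin (m * n + 1) ↦ σ (i.succ + r) :=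
    fun i j h ↦ Fin.succ_injective _ (add_right_cancel (σ.injective h))
  rcases exists_strictMono_comp_or_strictAnti_comp hinj (r := m) (s := n) (by simp)
    with ⟨f, hf, hσf⟩ | ⟨f, hf, hσf⟩
  · exact .inl ⟨r, containsPat_rotSeq_of_strictMono (fun _ _ h ↦ by simpa using h) hr hf
      hσf⟩
  · refine .inr ⟨r + 1, containsPat_rotSeq_add_one_of_strictAnti (fun i j h ↦ ?_) hr hf hσf⟩
    have := j.isLt
    simp only [Fin.lt_def] at h ⊢
    omega
end

section
/- For all nonnegative integers m and n, there exists a cyclic permutation of length mn+1 that avoids both the cyclic pattern [ι_{m+2}] and the cyclic pattern [δ_{n+2}]; that is, the bound mn+2 in the cyclic Erdős–Szekeres theorem is best possible. -/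
/-!
Take `σ x = n * x` on `ZMod (m * n + 1)`. Because `m * n ≡ -1`, on every rotation of `σ` the
potentials `x + m * σ x` and `n * x - σ x` are constant modulo `m * n + 1`. Along an occurrence
of `ι_{m+2}` (resp. `δ_{n+2}`) the first (resp. second) potential strictly increases, hence by at
least `m * n + 1` at each of its `m + 1` (resp. `n + 1`) steps, which exceeds its range.
-/

theorem Int.add_mul_le_of_strictMono_of_modEq {k : ℕ} {N : ℤ} {g : Fin (k + 1) → ℤ}
    (hg : StrictMono g) (hmod : ∀ i j, g i ≡ g j [ZMOD N]) :
    g 0 + k * N ≤ g (Fin.last k) := by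
  suffices h : ∀ i : Fin (k + 1), g 0 + i * N ≤ g i by simpa using h (Fin.last k)
  intro i
  induction i using Fin.induction with
  | zero => simp
  | succ i ih =>
    have hstep : N ≤ g i.succ - g i.castSucc :=
      Int.le_of_dvd (sub_pos.2 (hg i.castSucc_lt_succ)) (hmod _ _).dvd
    push_cast [Fin.val_succ, Fin.val_castSucc] at ih ⊢
    linarith

lemma natCast_mul_natCast_eq_neg_one (m n : ℕ) : (m * n : ZMod (m * n + 1)) = -1 := by
  have h : ((m * n + 1 : ℕ) : ZMod (m * n + 1)) = 0 := ZMod.natCast_self _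
  push_cast at h
  linear_combination h

def mulUnit (m n : ℕ) : (ZMod (m * n + 1))ˣ where
  val := n
  inv := -m
  val_inv := by linear_combination -natCast_mul_natCast_eq_neg_one m n
  inv_val := by linear_combination -natCast_mul_natCast_eq_neg_one m n

-- `ZMod (m * n + 1)` unfolds to `Fin (m * n + 1)`, with the same `+`.
def mulPerm (m n : ℕ) : Equiv.Perm (Fin (m * n + 1)) := Units.mulLeft (mulUnit m n)

lemma natCast_fin_val {k : ℕ} (x : Fin (k + 1)) : ((x : ℕ) : ZMod (k + 1)) = x :=
  ZMod.natCast_zmod_val (n := k + 1) x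

lemma rotSeq_mulPerm_modEq (m n : ℕ) (r x : Fin (m * n + 1)) :
    ((rotSeq (mulPerm m n) r x : ℕ) : ℤ) ≡ n * (x + r) [ZMOD (m * n + 1 : ℕ)] := by
  rw [← ZMod.intCast_eq_intCast_iff]
  push_cast
  rw [natCast_fin_val, natCast_fin_val, natCast_fin_val]
  rfl

lemma rotSeq_mulPerm_potential_increasing (m n : ℕ) (r x : Fin (m * n + 1)) :
    (x : ℤ) + m * (rotSeq (mulPerm m n) r x : ℕ) ≡ m * n * r [ZMOD (m * n + 1 : ℕ)] :=
  calc (x : ℤ) + m * (rotSeq (mulPerm m n) r x : ℕ)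
      ≡ x + m * (n * (x + r)) [ZMOD (m * n + 1 : ℕ)] :=
        ((rotSeq_mulPerm_modEq m n r x).mul_left _).add_left _
    _ = (m * n + 1 : ℕ) * x + m * n * r := by push_cast; ring
    _ ≡ 0 * x + m * n * r [ZMOD (m * n + 1 : ℕ)] :=
        ((Int.modEq_zero_iff_dvd.2 dvd_rfl).mul_right _).add_right _
    _ = m * n * r := by ring

lemma rotSeq_mulPerm_potential_decreasing (m n : ℕ) (r x : Fin (m * n + 1)) :
    n * (x : ℤ) - (rotSeq (mulPerm m n) r x : ℕ) ≡ -(n * r) [ZMOD (m * n + 1 : ℕ)] :=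
  calc n * (x : ℤ) - (rotSeq (mulPerm m n) r x : ℕ)
      ≡ n * x - n * (x + r) [ZMOD (m * n + 1 : ℕ)] :=
        (rotSeq_mulPerm_modEq m n r x).sub_left _
    _ = -(n * r) := by ring

theorem mulPerm_cycAvoids_increasing (m n : ℕ) :
    CycAvoids (mulPerm m n) (fun i : Fin (m + 2) => (i : ℕ) + 1) := by
  rintro ⟨r, f, hf, hord⟩
  set τ := rotSeq (mulPerm m n) r
  let g : Fin (m + 2) → ℤ := fun i => (f i : ℕ) + m * (τ (f i) : ℕ)
  have hg : StrictMono g := fun i j hij => by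
    have hpos : ((f i : ℕ) : ℤ) < f j := by exact_mod_cast hf hij
    have hval : ((τ (f i) : ℕ) : ℤ) ≤ τ (f j) := by
      exact_mod_cast ((hord i j).1 (by simpa using hij)).le
    simp only [g]
    linarith [mul_le_mul_of_nonneg_left hval (Int.natCast_nonneg m)]
  have hchain := Int.add_mul_le_of_strictMono_of_modEq hg fun i j =>
    (rotSeq_mulPerm_potential_increasing m n r (f i)).trans
      (rotSeq_mulPerm_potential_increasing m n r (f j)).symm
  have hfirst : 0 ≤ g 0 := by positivity
  have hlast : g (Fin.last _) ≤ m * n + m * (m * n) := by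
    have hpos : ((f (Fin.last _) : ℕ) : ℤ) ≤ m * n := by exact_mod_cast (f _).is_le
    have hval : ((τ (f (Fin.last _)) : ℕ) : ℤ) ≤ m * n := by exact_mod_cast (τ _).is_le
    simp only [g]
    linarith [mul_le_mul_of_nonneg_left hval (Int.natCast_nonneg m)]
  push_cast at hchain
  linarith

theorem mulPerm_cycAvoids_decreasing (m n : ℕ) :
    CycAvoids (mulPerm m n) (fun i : Fin (n + 2) => (n + 2) - (i : ℕ)) := by
  rintro ⟨r, f, hf, hord⟩
  set τ := rotSeq (mulPerm m n) r
  let g : Fin (n + 2) → ℤ := fun i => n * (f i : ℕ) - (τ (f i) : ℕ)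
  have hg : StrictMono g := fun i j hij => by
    have hpos : ((f i : ℕ) : ℤ) ≤ f j := by exact_mod_cast (hf hij).le
    have hval : ((τ (f j) : ℕ) : ℤ) < τ (f i) := by
      exact_mod_cast (hord j i).1 (by have := j.is_lt; simp only; omega)
    simp only [g]
    linarith [mul_le_mul_of_nonneg_left hpos (Int.natCast_nonneg n)]
  have hchain := Int.add_mul_le_of_strictMono_of_modEq hg fun i j =>
    (rotSeq_mulPerm_potential_decreasing m n r (f i)).trans
      (rotSeq_mulPerm_potential_decreasing m n r (f j)).symm
  have hfirst : -(m * n : ℤ) ≤ g 0 := by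
    have hval : ((τ (f 0) : ℕ) : ℤ) ≤ m * n := by exact_mod_cast (τ _).is_le
    simp only [g]
    linarith [mul_nonneg (Int.natCast_nonneg n) (Int.natCast_nonneg (f 0 : ℕ))]
  have hlast : g (Fin.last _) ≤ n * (m * n) := by
    have hpos : ((f (Fin.last _) : ℕ) : ℤ) ≤ m * n := by exact_mod_cast (f _).is_le
    simp only [g]
    linarith [mul_le_mul_of_nonneg_left hpos (Int.natCast_nonneg n)]
  push_cast at hchain
  linarith

/-- Sharpness of cyclic Erdős–Szekeres: there is a cyclic permutation of length
`m*n+1` avoiding both the cyclic increasing pattern of length `m+2` and the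
cyclic decreasing pattern of length `n+2`. -/
theorem cyclic_erdos_szekeres_sharp (m n : ℕ) :
    ∃ σ : Equiv.Perm (Fin (m * n + 1)),
      CycAvoids ⇑σ (fun i : Fin (m + 2) => (i : ℕ) + 1) ∧
      CycAvoids ⇑σ (fun i : Fin (n + 2) => (n + 2) - (i : ℕ)) :=
  ⟨mulPerm m n, mulPerm_cycAvoids_increasing m n, mulPerm_cycAvoids_decreasing m n⟩
end

section
/- For every integer n ≥ 3, the number of cyclic permutations of length n avoiding both cyclic patterns [1234] and [1342] equals 2(n−2); that is, #Av_n([1234],[1342]) = 2(n−2). -/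
/-!
Rotate a cyclic permutation so that its maximum comes first. A cyclic occurrence of a pattern is a
window `q₀ < q₁ < q₂ < q₃ < q₀ + n` of positions read modulo `n`. If `a → b` is an ascent, two
entries smaller than `σ a` in the arc from `b` back to `a` would form, together with `a` and `b`,
a `1234` or a `1342`. Applied to ascents ending at the maximum and to ascents between two entries
`≥ 2`, this forces the entries `≥ 2` to decrease from the maximum on, and the last entry to be `0`
or `1`. Hence an avoider is determined by the position `p ∈ [1, n - 2]` of the other small entry
and by which of `0`, `1` sits there; all `2 (n - 2)` of these avoid both patterns.
-/

open Fin.NatCast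

variable {n : ℕ}

section Window

variable [NeZero n]

theorem CycContains.exists_window {k : ℕ} {σ : Fin n → Fin n} {π : Fin k → ℕ}
    (h : CycContains σ π) : ∃ b < n, ∃ q : Fin k → ℕ, StrictMono q ∧
      (∀ i, b ≤ q i ∧ q i < b + n) ∧ ∀ i j, π i < π j ↔ σ (q i : Fin n) < σ (q j : Fin n) := by
  obtain ⟨r, f, hf, hπ⟩ := h
  refine ⟨r, r.isLt, fun i => f i + r, fun i j hij => Nat.add_lt_add_right (hf hij) _,
    fun i => ⟨Nat.le_add_left _ _, by simp only; have := (f i).isLt; omega⟩, fun i j => ?_⟩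
  simpa [rotSeq] using hπ i j

theorem cycContains_of_window {k : ℕ} {σ : Fin n → Fin n} {π : Fin k → ℕ} (b : ℕ)
    (q : Fin k → ℕ) (hq : StrictMono q) (hwin : ∀ i, b ≤ q i ∧ q i < b + n)
    (hπ : ∀ i j, π i < π j ↔ σ (q i : Fin n) < σ (q j : Fin n)) : CycContains σ π := by
  have hpos (i : Fin k) : (⟨q i - b, by grind⟩ : Fin n) + (b : Fin n) = (q i : Fin n) := by
    ext; simp [Fin.val_add, Nat.sub_add_cancel (hwin i).1]
  refine ⟨(b : Fin n), fun i => ⟨q i - b, by grind⟩, fun i j hij => ?_, fun i j => ?_⟩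
  · have := hq hij; have := hwin i; simp only [Fin.mk_lt_mk]; omega
  · simpa [rotSeq, hpos] using hπ i j

theorem cycContains_1234 {σ : Fin n → Fin n} {a b c d : ℕ} (hab : a < b) (hbc : b < c)
    (hcd : c < d) (hda : d < a + n) (h₁ : σ (a : Fin n) < σ (b : Fin n))
    (h₂ : σ (b : Fin n) < σ (c : Fin n)) (h₃ : σ (c : Fin n) < σ (d : Fin n)) :
    CycContains σ ![1,2,3,4] := by
  refine cycContains_of_window a ![a, b, c, d] ?_ ?_ ?_
  · simp [strictMono_vecCons]; omega
  · intro i; fin_cases i <;> simp <;> omega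
  · intro i j; fin_cases i <;> fin_cases j <;> simp <;> order

theorem cycContains_1342 {σ : Fin n → Fin n} {a b c d : ℕ} (hab : a < b) (hbc : b < c)
    (hcd : c < d) (hda : d < a + n) (h₁ : σ (a : Fin n) < σ (d : Fin n))
    (h₂ : σ (d : Fin n) < σ (b : Fin n)) (h₃ : σ (b : Fin n) < σ (c : Fin n)) :
    CycContains σ ![1,3,4,2] := by
  refine cycContains_of_window a ![a, b, c, d] ?_ ?_ ?_
  · simp [strictMono_vecCons]; omega
  · intro i; fin_cases i <;> simp <;> omega
  · intro i j; fin_cases i <;> fin_cases j <;> simp <;> order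

theorem false_of_two_below_ascent {σ : Fin n → Fin n} (h1234 : CycAvoids σ ![1,2,3,4])
    (h1342 : CycAvoids σ ![1,3,4,2]) {a b x y : ℕ} (hab : a < b) (hbx : b < x) (hby : b < y)
    (hxa : x < a + n) (hya : y < a + n) (hσab : σ (a : Fin n) < σ (b : Fin n))
    (hσxy : σ (x : Fin n) < σ (y : Fin n)) (hσya : σ (y : Fin n) < σ (a : Fin n)) : False := by
  have hshift (m : ℕ) : ((m + n : ℕ) : Fin n) = m := by simp
  rcases lt_or_gt_of_ne (fun hxy : x = y => (hxy ▸ hσxy).false) with hxy | hyx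
  · exact h1234 (cycContains_1234 (c := a + n) (d := b + n) hxy hya (by omega) (by omega) hσxy
      (by rwa [hshift]) (by rwa [hshift, hshift]))
  · exact h1342 (cycContains_1342 (a := x) (b := a + n) (c := b + n) (d := y + n) (by omega)
      (by omega) (by omega) (by omega) (by rwa [hshift]) (by rwa [hshift, hshift])
      (by rwa [hshift, hshift]))

end Window

section Rotation

variable [NeZero n]

theorem rotSeq_rotSeq (σ : Fin n → Fin n) (r s : Fin n) :
    rotSeq (rotSeq σ r) s = rotSeq σ (s + r) := by
  funext i; simp [rotSeq, add_assoc]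

theorem cycContains_rotSeq_iff {k : ℕ} (σ : Fin n → Fin n) (r : Fin n) (π : Fin k → ℕ) :
    CycContains (rotSeq σ r) π ↔ CycContains σ π := by
  constructor
  · rintro ⟨s, h⟩
    exact ⟨s + r, rotSeq_rotSeq σ r s ▸ h⟩
  · rintro ⟨s, h⟩
    exact ⟨s - r, by rwa [rotSeq_rotSeq, sub_add_cancel]⟩

theorem cycClass_rotSeq (σ : Fin n → Fin n) (r : Fin n) :
    CycClass (rotSeq σ r) = CycClass σ := by
  ext τ
  constructor
  · rintro ⟨s, rfl⟩
    exact ⟨s + r, (rotSeq_rotSeq σ r s).symm⟩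
  · rintro ⟨s, rfl⟩
    exact ⟨s - r, by rw [rotSeq_rotSeq, sub_add_cancel]⟩

theorem eq_of_cycClass_eq {σ τ : Fin n → Fin n} (hσ : σ.Injective)
    (h : CycClass σ = CycClass τ) (h0 : σ 0 = τ 0) : σ = τ := by
  obtain ⟨r, rfl⟩ : τ ∈ CycClass σ := h ▸ ⟨0, by funext i; simp [rotSeq]⟩
  obtain rfl : r = 0 := hσ (by simpa [rotSeq] using h0.symm)
  funext i; simp [rotSeq]

end Rotation

section Uniqueness

open Finset

theorem Equiv.Perm.card_filter_lt_apply (σ : Equiv.Perm (Fin n)) (x : Fin n) :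
    #{j | σ x < σ j} = n - 1 - σ x := by
  rw [← Fin.card_Ioi]
  exact card_equiv σ (by simp)

theorem StrictAntiOn.filter_lt_apply_eq {f : Fin n → Fin n} {t : ℕ}
    (hf : StrictAntiOn f {x | t ≤ (f x : ℕ)}) {x : Fin n} (hx : t ≤ (f x : ℕ)) :
    filter (fun j => f x < f j) univ = filter (fun j => t ≤ (f j : ℕ) ∧ j < x) univ := by
  ext j
  simp only [mem_filter, mem_univ, true_and]
  constructor
  · intro h
    have hj : t ≤ (f j : ℕ) := hx.trans (Fin.lt_def.1 h).le
    exact ⟨hj, (hf.lt_iff_gt hx hj).1 h⟩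
  · rintro ⟨hj, hjx⟩
    exact (hf.lt_iff_gt hx hj).2 hjx

theorem Equiv.Perm.eq_of_strictAntiOn_of_eq_below {t : ℕ} {σ τ : Equiv.Perm (Fin n)}
    (hlow : ∀ x, (σ x : ℕ) < t → σ x = τ x) (hσ : StrictAntiOn σ {x | t ≤ (σ x : ℕ)})
    (hτ : StrictAntiOn τ {x | t ≤ (τ x : ℕ)}) : σ = τ := by
  have hlow' (x) (hx : (τ x : ℕ) < t) : σ x = τ x := by
    obtain ⟨y, hy⟩ := σ.surjective (τ x)
    obtain rfl : y = x := τ.injective ((hlow y (hy ▸ hx)).symm.trans hy)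
    exact hy
  have hhigh (x) : t ≤ (σ x : ℕ) ↔ t ≤ (τ x : ℕ) := by
    constructor <;> intro h <;> by_contra h'
    · rw [← hlow' x (not_le.1 h')] at h'; omega
    · rw [hlow x (not_le.1 h')] at h'; omega
  ext x
  by_cases hx : (σ x : ℕ) < t
  · rw [hlow x hx]
  · have hσx := σ.card_filter_lt_apply x
    have hτx := τ.card_filter_lt_apply x
    rw [hσ.filter_lt_apply_eq (not_lt.1 hx)] at hσx
    rw [hτ.filter_lt_apply_eq ((hhigh x).1 (not_lt.1 hx))] at hτx
    simp_rw [hhigh] at hσx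
    have := (σ x).isLt; have := (τ x).isLt
    omega

end Uniqueness

section Canonical

/-- The 0-indexed values `n - 1, n - 2, …, 2` in decreasing order, with `e ∈ {0, 1}` inserted at
position `p` and `1 - e` at the last position. -/
def canonAvoiderVal (n p e q : ℕ) : ℕ :=
  if q = p then e else if q = n - 1 then 1 - e else if q < p then n - 1 - q else n - q

-- `% n` only makes this total; `canonAvoider_val` removes it in the relevant range.
def canonAvoider (n p e : ℕ) : Fin n → Fin n :=
  fun i => ⟨canonAvoiderVal n p e i % n, Nat.mod_lt _ i.pos⟩

variable {p e : ℕ}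

theorem canonAvoider_val (hpn : p + 2 ≤ n) (he : e < 2) (i : Fin n) :
    (canonAvoider n p e i : ℕ) = canonAvoiderVal n p e i :=
  Nat.mod_eq_of_lt (by have := i.isLt; unfold canonAvoiderVal; split_ifs <;> omega)

theorem canonAvoider_injective (hpn : p + 2 ≤ n) (he : e < 2) :
    (canonAvoider n p e).Injective := by
  intro i j h
  have hij := congrArg Fin.val h
  rw [canonAvoider_val hpn he, canonAvoider_val hpn he] at hij
  have := i.isLt; have := j.isLt
  ext; unfold canonAvoiderVal at hij; split_ifs at hij <;> omega

theorem canonAvoider_zero [NeZero n] (hp : 1 ≤ p) (hpn : p + 2 ≤ n) (he : e < 2) :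
    (canonAvoider n p e 0 : ℕ) = n - 1 := by
  rw [canonAvoider_val hpn he, Fin.val_zero, canonAvoiderVal, if_neg (by omega),
    if_neg (by omega), if_pos (by omega), Nat.sub_zero]

theorem eq_of_canonAvoider_eq {p' e' : ℕ} (hpn : p + 2 ≤ n) (he : e < 2) (hpn' : p' + 2 ≤ n)
    (he' : e' < 2) (h : canonAvoider n p e = canonAvoider n p' e') : p = p' ∧ e = e' := by
  have hv (q : ℕ) (hq : q < n) : canonAvoiderVal n p e q = canonAvoiderVal n p' e' q := by
    have := congrArg Fin.val (congrFun h ⟨q, hq⟩)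
    rwa [canonAvoider_val hpn he, canonAvoider_val hpn' he'] at this
  have h₁ := hv p (by omega); have h₂ := hv p' (by omega)
  unfold canonAvoiderVal at h₁ h₂; split_ifs at h₁ h₂ <;> omega

theorem canonAvoider_lt_two (hpn : p + 2 ≤ n) (he : e < 2) (i : Fin n)
    (hi : (canonAvoider n p e i : ℕ) < 2) : (i : ℕ) = p ∨ (i : ℕ) = n - 1 := by
  have := i.isLt
  rw [canonAvoider_val hpn he] at hi; unfold canonAvoiderVal at hi; split_ifs at hi <;> omega

theorem canonAvoider_strictAntiOn (hpn : p + 2 ≤ n) (he : e < 2) :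
    StrictAntiOn (canonAvoider n p e) {x | 2 ≤ (canonAvoider n p e x : ℕ)} := by
  intro i (hi : 2 ≤ (canonAvoider n p e i : ℕ)) j (hj : 2 ≤ (canonAvoider n p e j : ℕ)) hij
  rw [Fin.lt_def] at hij ⊢
  simp only [canonAvoider_val hpn he] at hi hj ⊢
  have := i.isLt; have := j.isLt
  unfold canonAvoiderVal at hi hj ⊢; split_ifs at hi hj ⊢ <;> omega

end Canonical

section Normalized

variable [NeZero n] {σ : Equiv.Perm (Fin n)}

theorem val_apply_lt_of_ne_zero (h0 : (σ 0 : ℕ) = n - 1) {z : Fin n} (hz : (z : ℕ) ≠ 0) :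
    (σ z : ℕ) < n - 1 := by
  have : σ z ≠ σ 0 := σ.injective.ne fun h => hz (by simp [h])
  have := Fin.val_ne_of_ne this
  have := (σ z).isLt
  omega

theorem strictAntiOn_of_avoids (h0 : (σ 0 : ℕ) = n - 1) (h1234 : CycAvoids σ ![1,2,3,4])
    (h1342 : CycAvoids σ ![1,3,4,2]) : StrictAntiOn σ {x | 2 ≤ (σ x : ℕ)} := by
  intro x (hx : 2 ≤ (σ x : ℕ)) y (hy : 2 ≤ (σ y : ℕ)) hxy
  by_contra hle
  have hσxy : σ x < σ y := lt_of_le_of_ne (not_lt.1 hle) (σ.injective.ne hxy.ne)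
  rw [Fin.lt_def] at hxy hσxy
  have hy0 := val_apply_lt_of_ne_zero h0 (z := y) (by omega)
  have hx0 : (x : ℕ) ≠ 0 := fun h => by
    rw [show x = 0 from Fin.ext h] at hσxy; omega
  -- an entry below `σ x` before `y` would follow the ascent from `y` to the maximum at `n ≡ 0`
  have hafter (m : Fin n) (hm : (σ m : ℕ) < σ x) : (y : ℕ) < m := by
    have hm0 : (m : ℕ) ≠ 0 := fun h => by
      rw [show m = 0 from Fin.ext h] at hm; omega
    have hmy : (m : ℕ) ≠ y := fun h => by
      rw [show m = y from Fin.ext h] at hm; omega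
    by_contra
    refine false_of_two_below_ascent h1234 h1342 (a := y) (b := n) (x := m + n) (y := x + n)
      ?_ ?_ ?_ ?_ ?_ ?_ ?_ ?_ <;>
    simp -failIfUnchanged only [Nat.cast_add, Fin.cast_val_eq_self, Fin.natCast_self, add_zero,
      Fin.lt_def] <;>
    omega
  obtain ⟨c₀, hc₀⟩ := σ.surjective ⟨0, by omega⟩
  obtain ⟨c₁, hc₁⟩ := σ.surjective ⟨1, by omega⟩
  have h₀ := hafter c₀ (by simp only [hc₀]; omega)
  have h₁ := hafter c₁ (by simp only [hc₁]; omega)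
  refine false_of_two_below_ascent h1234 h1342 (a := x) (b := y) (x := c₀) (y := c₁)
    ?_ ?_ ?_ ?_ ?_ ?_ ?_ ?_ <;>
  simp -failIfUnchanged only [Fin.cast_val_eq_self, Fin.lt_def, hc₀, hc₁] <;>
  omega

theorem val_apply_lt_two_of_avoids (h0 : (σ 0 : ℕ) = n - 1) (h1234 : CycAvoids σ ![1,2,3,4])
    (h1342 : CycAvoids σ ![1,3,4,2]) {x : Fin n} (hx : (x : ℕ) = n - 1) : (σ x : ℕ) < 2 := by
  by_contra hbig
  have hx0 := val_apply_lt_of_ne_zero h0 (z := x) (by omega)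
  obtain ⟨c₀, hc₀⟩ := σ.surjective ⟨0, by omega⟩
  obtain ⟨c₁, hc₁⟩ := σ.surjective ⟨1, by omega⟩
  have hc (c : Fin n) (hc : (σ c : ℕ) < 2) : 0 < (c : ℕ) ∧ (c : ℕ) < n - 1 := by
    refine ⟨Nat.pos_of_ne_zero fun h => ?_,
      lt_of_le_of_ne (Nat.le_sub_one_of_lt c.isLt) fun h => ?_⟩
    · rw [show c = 0 from Fin.ext h] at hc; omega
    · rw [show c = x from Fin.ext (h.trans hx.symm)] at hc; omega
  have h₀ := hc c₀ (by simp only [hc₀]; omega)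
  have h₁ := hc c₁ (by simp only [hc₁]; omega)
  refine false_of_two_below_ascent h1234 h1342 (a := x) (b := n) (x := c₀ + n) (y := c₁ + n)
    ?_ ?_ ?_ ?_ ?_ ?_ ?_ ?_ <;>
  simp -failIfUnchanged only [Nat.cast_add, Fin.cast_val_eq_self, Fin.natCast_self, add_zero,
    Fin.lt_def, hc₀, hc₁] <;>
  omega

end Normalized

section Shape

variable [NeZero n] {σ : Fin n → Fin n} {p : ℕ}

theorem val_natCast_cases {m : ℕ} (h : m < n + n) :
    ((m : Fin n) : ℕ) = m ∧ m < n ∨ ((m : Fin n) : ℕ) + n = m ∧ n ≤ m := by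
  rcases lt_or_ge m n with hm | hm
  · exact .inl ⟨by simp [Nat.mod_eq_of_lt hm], hm⟩
  · refine .inr ⟨?_, hm⟩
    rw [Fin.val_natCast, Nat.mod_eq_sub_mod hm, Nat.mod_eq_of_lt (by omega)]
    omega

theorem cycAvoids_1234_of_shape (hsmall : ∀ x, (σ x : ℕ) < 2 → (x : ℕ) = p ∨ (x : ℕ) = n - 1)
    (hanti : StrictAntiOn σ {x | 2 ≤ (σ x : ℕ)}) : CycAvoids σ ![1,2,3,4] := by
  intro h
  obtain ⟨b, hb, q, hq, hwin, hπ⟩ := h.exists_window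
  have h₁ := Fin.lt_def.1 ((hπ 0 1).1 (by simp))
  have h₂ := Fin.lt_def.1 ((hπ 1 2).1 (by simp))
  have h₃ := Fin.lt_def.1 ((hπ 2 3).1 (by simp))
  have hq₁ : q 0 < q 1 := hq (by decide)
  have hq₂ : q 1 < q 2 := hq (by decide)
  have hq₃ : q 2 < q 3 := hq (by decide)
  have hw₀ := hwin 0; have hw₃ := hwin 3
  have c₀ := val_natCast_cases (n := n) (m := q 0) (by omega)
  have c₁ := val_natCast_cases (n := n) (m := q 1) (by omega)
  have c₂ := val_natCast_cases (n := n) (m := q 2) (by omega)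
  have c₃ := val_natCast_cases (n := n) (m := q 3) (by omega)
  have big₂ : 2 ≤ (σ (q 2 : Fin n) : ℕ) := by omega
  have big₃ : 2 ≤ (σ (q 3 : Fin n) : ℕ) := by omega
  have h₃₂ := Fin.lt_def.1 ((hanti.lt_iff_gt big₂ big₃).1 (Fin.lt_def.2 h₃))
  by_cases big₁ : 2 ≤ (σ (q 1 : Fin n) : ℕ)
  · have h₂₁ := Fin.lt_def.1 ((hanti.lt_iff_gt big₁ big₂).1 (Fin.lt_def.2 h₂))
    omega
  · have s₀ := hsmall (q 0) (by omega)
    have s₁ := hsmall (q 1) (by omega)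
    omega

theorem cycAvoids_1342_of_shape (hsmall : ∀ x, (σ x : ℕ) < 2 → (x : ℕ) = p ∨ (x : ℕ) = n - 1)
    (hanti : StrictAntiOn σ {x | 2 ≤ (σ x : ℕ)}) : CycAvoids σ ![1,3,4,2] := by
  intro h
  obtain ⟨b, hb, q, hq, hwin, hπ⟩ := h.exists_window
  have h₁ := Fin.lt_def.1 ((hπ 0 3).1 (by simp))
  have h₂ := Fin.lt_def.1 ((hπ 3 1).1 (by simp))
  have h₃ := Fin.lt_def.1 ((hπ 1 2).1 (by simp))
  have hq₁ : q 0 < q 1 := hq (by decide)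
  have hq₂ : q 1 < q 2 := hq (by decide)
  have hq₃ : q 2 < q 3 := hq (by decide)
  have hw₀ := hwin 0; have hw₃ := hwin 3
  have c₀ := val_natCast_cases (n := n) (m := q 0) (by omega)
  have c₁ := val_natCast_cases (n := n) (m := q 1) (by omega)
  have c₂ := val_natCast_cases (n := n) (m := q 2) (by omega)
  have c₃ := val_natCast_cases (n := n) (m := q 3) (by omega)
  have big₁ : 2 ≤ (σ (q 1 : Fin n) : ℕ) := by omega
  have big₂ : 2 ≤ (σ (q 2 : Fin n) : ℕ) := by omega
  have h₂₁ := Fin.lt_def.1 ((hanti.lt_iff_gt big₁ big₂).1 (Fin.lt_def.2 h₃))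
  by_cases big₃ : 2 ≤ (σ (q 3 : Fin n) : ℕ)
  · have h₁₃ := Fin.lt_def.1 ((hanti.lt_iff_gt big₃ big₁).1 (Fin.lt_def.2 h₂))
    omega
  · have s₀ := hsmall (q 0) (by omega)
    have s₃ := hsmall (q 3) (by omega)
    omega

end Shape

section Classification

variable [NeZero n] {p e : ℕ}

theorem canonAvoider_avoids (hpn : p + 2 ≤ n) (he : e < 2) :
    CycAvoids (canonAvoider n p e) ![1,2,3,4] ∧ CycAvoids (canonAvoider n p e) ![1,3,4,2] :=
  ⟨cycAvoids_1234_of_shape (canonAvoider_lt_two hpn he) (canonAvoider_strictAntiOn hpn he),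
    cycAvoids_1342_of_shape (canonAvoider_lt_two hpn he) (canonAvoider_strictAntiOn hpn he)⟩

theorem exists_eq_canonAvoider (hn : 3 ≤ n) {σ : Equiv.Perm (Fin n)} (h0 : (σ 0 : ℕ) = n - 1)
    (h1234 : CycAvoids σ ![1,2,3,4]) (h1342 : CycAvoids σ ![1,3,4,2]) :
    ∃ p e, 1 ≤ p ∧ p + 2 ≤ n ∧ e < 2 ∧ ⇑σ = canonAvoider n p e := by
  set ℓ : Fin n := ⟨n - 1, by omega⟩
  have hℓ := val_apply_lt_two_of_avoids h0 h1234 h1342 (x := ℓ) rfl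
  obtain ⟨c, hc⟩ := σ.surjective ⟨1 - σ ℓ, by omega⟩
  have hc' : (σ c : ℕ) = 1 - σ ℓ := by rw [hc]
  have hc0 : (c : ℕ) ≠ 0 := fun h => by rw [show c = 0 from Fin.ext h] at hc'; omega
  have hcℓ : (c : ℕ) ≠ n - 1 := fun h => by rw [show c = ℓ from Fin.ext h] at hc'; omega
  have hpn : (c : ℕ) + 2 ≤ n := by have := c.isLt; omega
  have he : 1 - (σ ℓ : ℕ) < 2 := by omega
  refine ⟨c, 1 - σ ℓ, by omega, hpn, he, ?_⟩
  let τ := Equiv.ofBijective _ ((canonAvoider_injective hpn he).bijective_of_finite)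
  suffices σ = τ from congrArg DFunLike.coe this
  refine Equiv.Perm.eq_of_strictAntiOn_of_eq_below (t := 2) (fun x hx => Fin.ext ?_)
    (strictAntiOn_of_avoids h0 h1234 h1342) (canonAvoider_strictAntiOn hpn he)
  show (σ x : ℕ) = canonAvoider n c (1 - σ ℓ) x
  rw [canonAvoider_val hpn he, canonAvoiderVal]
  by_cases hxℓ : (σ x : ℕ) = σ ℓ
  · obtain rfl : x = ℓ := σ.injective (Fin.ext hxℓ)
    rw [if_neg (Ne.symm hcℓ), if_pos rfl]
    omega
  · obtain rfl : x = c := σ.injective (Fin.ext (by omega))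
    rw [if_pos rfl, hc']

end Classification

section Counting

open Finset

variable [NeZero n]

theorem avClasses_eq_image (hn : 3 ≤ n) :
    AvClasses n (fun σ => CycAvoids σ ![1,2,3,4] ∧ CycAvoids σ ![1,3,4,2]) =
      (fun pe : ℕ × ℕ => CycClass (canonAvoider n pe.1 pe.2)) '' ↑(Icc 1 (n - 2) ×ˢ range 2) := by
  ext C
  constructor
  · rintro ⟨σ, rfl, h1234, h1342⟩
    set r := σ.symm ⟨n - 1, by omega⟩
    let τ : Equiv.Perm (Fin n) := (Equiv.addRight r).trans σ
    have hτ : ⇑τ = rotSeq σ r := rfl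
    obtain ⟨p, e, hp, hpn, he, hτc⟩ := exists_eq_canonAvoider hn (σ := τ) (by simp [τ, r])
      (hτ ▸ (cycContains_rotSeq_iff σ r _).not.2 h1234)
      (hτ ▸ (cycContains_rotSeq_iff σ r _).not.2 h1342)
    refine ⟨(p, e), ?_, by simp only; rw [← hτc, hτ, cycClass_rotSeq]⟩
    simp only [mem_coe, mem_product, mem_Icc, mem_range]
    omega
  · rintro ⟨⟨p, e⟩, hpe, rfl⟩
    simp only [mem_coe, mem_product, mem_Icc, mem_range] at hpe
    have hpn : p + 2 ≤ n := by omega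
    exact ⟨Equiv.ofBijective _ ((canonAvoider_injective hpn hpe.2).bijective_of_finite),
      rfl, canonAvoider_avoids hpn hpe.2⟩

theorem injOn_cycClass_canonAvoider :
    Set.InjOn (fun pe : ℕ × ℕ => CycClass (canonAvoider n pe.1 pe.2))
      ↑(Icc 1 (n - 2) ×ˢ range 2) := by
  rintro ⟨p, e⟩ hpe ⟨p', e'⟩ hpe' h
  simp only [mem_coe, mem_product, mem_Icc, mem_range] at hpe hpe'
  have hp : 1 ≤ p := hpe.1.1
  have hpn : p + 2 ≤ n := by omega
  have hp' : 1 ≤ p' := hpe'.1.1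
  have hpn' : p' + 2 ≤ n := by omega
  have h0 : canonAvoider n p e 0 = canonAvoider n p' e' 0 :=
    Fin.ext ((canonAvoider_zero hp hpn hpe.2).trans (canonAvoider_zero hp' hpn' hpe'.2).symm)
  obtain ⟨rfl, rfl⟩ := eq_of_canonAvoider_eq hpn hpe.2 hpn' hpe'.2
    (eq_of_cycClass_eq (canonAvoider_injective hpn hpe.2) h h0)
  rfl

end Counting

theorem card_av_1234_1342 (n : ℕ) (hn : 3 ≤ n) :
    (AvClasses n fun σ => CycAvoids σ ![1,2,3,4] ∧ CycAvoids σ ![1,3,4,2]).ncard = 2 * (n - 2) := by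
  have : NeZero n := ⟨by omega⟩
  rw [avClasses_eq_image hn, injOn_cycClass_canonAvoider.ncard_image,
    Set.ncard_coe_finset, Finset.card_product, Nat.card_Icc, Finset.card_range]
  omega
end

section
/- For every integer n ≥ 6, there are no cyclic permutations of length n avoiding both cyclic patterns [1234] and [1432]; that is, #Av_n([1234],[1432]) = 0. -/
/-! Rotate `σ` so that its smallest entry `1` comes first. Among the remaining `n - 1 ≥ 5`
entries there is a monotone subsequence of length three (Erdős–Szekeres, `5 > 2 · 2`); preceded
by the `1` it is an occurrence of `1234` if increasing and of `1432` if decreasing. -/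

open Function

theorem exists_monotone_triple_of_four_lt_card {ι α : Type*} [LinearOrder ι] [Fintype ι]
    [LinearOrder α] (hι : 4 < Fintype.card ι) {f : ι → α} (hf : Injective f) :
    ∃ i j k, i < j ∧ j < k ∧ (f i < f j ∧ f j < f k ∨ f k < f j ∧ f j < f i) := by
  obtain ⟨i, k, hik, hlabel⟩ := Fintype.exists_ne_map_eq_of_card_lt
    (fun i => ((∃ j < i, f j < f i), (∃ j < i, f i < f j))) (by simpa using hι)
  -- Two of the indices share a label; the later one extends a monotone pair ending at the earlier.
  wlog hlt : i < k generalizing i k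
  · exact this k i hik.symm hlabel.symm (hik.lt_or_gt.resolve_left hlt)
  simp only [Prod.mk.injEq, eq_iff_iff] at hlabel
  rcases (hf.ne hik).lt_or_gt with hf_lt | hf_lt
  · obtain ⟨j, hji, hj⟩ := hlabel.1.2 ⟨i, hlt, hf_lt⟩
    exact ⟨j, i, k, hji, hlt, .inl ⟨hj, hf_lt⟩⟩
  · obtain ⟨j, hji, hj⟩ := hlabel.2.2 ⟨i, hlt, hf_lt⟩
    exact ⟨j, i, k, hji, hlt, .inr ⟨hf_lt, hj⟩⟩

theorem containsPat_1234 {n : ℕ} {σ : Fin n → Fin n} {a b c d : Fin n}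
    (hab : a < b) (hbc : b < c) (hcd : c < d)
    (h₁ : σ a < σ b) (h₂ : σ b < σ c) (h₃ : σ c < σ d) : ContainsPat σ ![1,2,3,4] := by
  refine ⟨![a, b, c, d], ?_, ?_⟩
  · simp [Fin.strictMono_iff_lt_succ, Fin.forall_fin_succ, hab, hbc, hcd]
  · intro i j
    fin_cases i <;> fin_cases j <;> simp <;> order

theorem containsPat_1432 {n : ℕ} {σ : Fin n → Fin n} {a b c d : Fin n}
    (hab : a < b) (hbc : b < c) (hcd : c < d)
    (h₁ : σ a < σ d) (h₂ : σ d < σ c) (h₃ : σ c < σ b) : ContainsPat σ ![1,4,3,2] := by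
  refine ⟨![a, b, c, d], ?_, ?_⟩
  · simp [Fin.strictMono_iff_lt_succ, Fin.forall_fin_succ, hab, hbc, hcd]
  · intro i j
    fin_cases i <;> fin_cases j <;> simp <;> order

theorem cycContains_1234_or_cycContains_1432 {n : ℕ} (hn : 6 ≤ n) (σ : Equiv.Perm (Fin n)) :
    CycContains σ ![1,2,3,4] ∨ CycContains σ ![1,4,3,2] := by
  obtain ⟨m, rfl⟩ : ∃ m, n = m + 1 := ⟨n - 1, by omega⟩
  set τ := rotSeq σ (σ.symm 0)
  have hτ : Injective τ := σ.injective.comp (add_left_injective _)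
  have hτ0 : τ 0 = 0 := by simp [τ, rotSeq]
  have hτ_zero_lt : ∀ i : Fin m, τ 0 < τ i.succ := fun i => by
    rw [hτ0, Fin.pos_iff_ne_zero, ← hτ0]
    exact hτ.ne (Fin.succ_ne_zero i)
  obtain ⟨i, j, k, hij, hjk, hmono⟩ :=
    exists_monotone_triple_of_four_lt_card (f := τ ∘ Fin.succ) (by simp; omega)
      (hτ.comp (Fin.succ_injective m))
  have hij' := Fin.succ_lt_succ_iff.2 hij
  have hjk' := Fin.succ_lt_succ_iff.2 hjk
  rcases hmono with ⟨h₁, h₂⟩ | ⟨h₁, h₂⟩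
  · exact .inl ⟨_, containsPat_1234 (Fin.succ_pos i) hij' hjk' (hτ_zero_lt i) h₁ h₂⟩
  · exact .inr ⟨_, containsPat_1432 (Fin.succ_pos i) hij' hjk' (hτ_zero_lt k) h₁ h₂⟩

theorem card_av_1234_1432 (n : ℕ) (hn : 6 ≤ n) :
    (AvClasses n fun σ => CycAvoids σ ![1,2,3,4] ∧ CycAvoids σ ![1,4,3,2]).ncard = 0 := by
  suffices h : (AvClasses n fun σ => CycAvoids σ ![1,2,3,4] ∧ CycAvoids σ ![1,4,3,2]) = ∅ by
    rw [h, Set.ncard_empty]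
  refine Set.eq_empty_of_forall_notMem ?_
  rintro C ⟨σ, -, h1234, h1432⟩
  exact (cycContains_1234_or_cycContains_1432 hn σ).elim h1234 h1432
end
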